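/- Consider a closed Hilbert complex segment (W0, W1, W2, d0, d1, V0, V1) with harmonic space H and graph norm ‖v‖_{V1} = (‖v‖² + ‖d1 v‖²)^{1/2}; let F : V1 → W1 be monotone and V-Lipschitz with constant C_F. Let W1h be a finite-dimensional real inner product space (inner product ⟨·,·⟩_h), i1 : W1h → W1 an injective bounded linear map with i1(W1h) ⊆ V1, i1* : W1 → W1h its adjoint (⟨i1* w, v⟩_h = ⟨w, i1 v⟩), J1 = i1* ∘ i1, and P_{V_h} : V1 → W1h the map such that i1(P_{V_h} v) is the orthogonal projection of v onto i1(W1h) with respect to the graph inner product ⟨u, v⟩ + ⟨d1 u, d1 v⟩ on V1. Let Π1 : W1 → W1h be a bounded linear map with Π1(i1 v) = v for all v ∈ W1h. If (σ, u, p) ∈ V0 × V1 × H solves the mixed semilinear problem with datum f ∈ W1, then ‖i1*(f − F(u + p)) − (Π1 f − Π1 F(i1 P_{V_h}(u + p)))‖_h ≤ C ( ‖id − J1‖ · ‖f − F(u + p)‖ + inf_{φ ∈ i1(W1h)} ‖(f − F(u + p)) − φ‖ + inf_{v ∈ i1(W1h)} ‖u − v‖_{V1} + inf_{q ∈ i1(W1h)}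 ‖p − q‖_{V1} ), where C depends only on the operator norms of i1 and Π1 and on C_F. -/

import Mathlib

/-!
Write `g = f - F(u+p)` and `w_h = i1 P_{V_h}(u+p)`. For every `φ ∈ W1h`,
`i1* g - (Π1 f - Π1 F(w_h)) = i1*(g - i1 φ) - Π1 (g - i1 φ) - (id - J1) φ - Π1 (F(u+p) - F(w_h))`.
As `Π1` is a left inverse of `i1`, `‖φ‖ ≤ ‖Π1‖ (‖g‖ + ‖g - i1 φ‖)`, while `‖i1*‖ ≤ ‖i1‖` and
`‖id - J1‖ ≤ 1 + ‖i1‖²`. The last term is at most `‖Π1‖ C_F ‖u + p - w_h‖_V`, and `w_h` is the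
best approximation of `u + p` from `i1(W1h)` in the graph norm, which is the norm of the graph
of `d1` in the Hilbert sum `W1 ⊕₂ W2`.
-/

open scoped RealInnerProductSpace

section

variable {W0 W1 W2 : Type*}
  [NormedAddCommGroup W0] [InnerProductSpace ℝ W0] [CompleteSpace W0]
  [NormedAddCommGroup W1] [InnerProductSpace ℝ W1] [CompleteSpace W1]
  [NormedAddCommGroup W2] [InnerProductSpace ℝ W2] [CompleteSpace W2]

/-- Membership in the harmonic space `H = {w ∈ V1 : d1 w = 0, w ⟂ d0(V0)}`. -/
def IsHarmonic (V0 : Submodule ℝ W0) {V1 : Submodule ℝ W1}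
    (d0 : V0 →ₗ[ℝ] W1) (d1 : V1 →ₗ[ℝ] W2) (q : V1) : Prop :=
  d1 q = 0 ∧ ∀ τ : V0, ⟪(q : W1), d0 τ⟫ = 0

/-- The graph (V-)norm `‖v‖_{V1} = (‖v‖² + ‖d1 v‖²)^{1/2}` on the domain of `d1`. -/
noncomputable def graphNorm1 {V1 : Submodule ℝ W1} (d1 : V1 →ₗ[ℝ] W2) (v : V1) : ℝ :=
  Real.sqrt (‖(v : W1)‖ ^ 2 + ‖d1 v‖ ^ 2)

/-- `(σ, u, p)` solves the mixed semilinear problem with nonlinearity `F` and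
datum `f`. -/
def IsMixedSemilinearSolution (V0 : Submodule ℝ W0) {V1 : Submodule ℝ W1}
    (d0 : V0 →ₗ[ℝ] W1) (d1 : V1 →ₗ[ℝ] W2) (F : V1 → W1) (f : W1)
    (σ : V0) (u p : V1) : Prop :=
  IsHarmonic V0 d0 d1 p ∧
  (∀ τ : V0, ⟪(σ : W0), (τ : W0)⟫ - ⟪(u : W1), d0 τ⟫ = 0) ∧
  (∀ v : V1, ⟪d0 σ, (v : W1)⟫ + ⟪d1 u, d1 v⟫ + ⟪(p : W1), (v : W1)⟫ +
      ⟪F (u + p), (v : W1)⟫ = ⟪f, (v : W1)⟫) ∧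
  (∀ q : V1, IsHarmonic V0 d0 d1 q → ⟪(u : W1), (q : W1)⟫ = 0)

section GraphNorm

variable {X Y : Type*}
  [NormedAddCommGroup X] [InnerProductSpace ℝ X] [NormedAddCommGroup Y] [InnerProductSpace ℝ Y]
  {V : Submodule ℝ X} (d : V →ₗ[ℝ] Y)

noncomputable def graphL2 : V →ₗ[ℝ] WithLp 2 (X × Y) :=
  (WithLp.linearEquiv 2 ℝ (X × Y)).symm.toLinearMap ∘ₗ V.subtype.prod d

theorem graphNorm1_eq_norm_graphL2 (v : V) : graphNorm1 d v = ‖graphL2 d v‖ := by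
  rw [graphNorm1, WithLp.prod_norm_eq_of_L2]
  rfl

theorem inner_graphL2 (a b : V) :
    ⟪graphL2 d a, graphL2 d b⟫ = ⟪(a : X), (b : X)⟫ + ⟪d a, d b⟫ :=
  rfl

theorem graphNorm1_nonneg (v : V) : 0 ≤ graphNorm1 d v :=
  Real.sqrt_nonneg _

theorem graphNorm1_add_le (a b : V) :
    graphNorm1 d (a + b) ≤ graphNorm1 d a + graphNorm1 d b := by
  simp only [graphNorm1_eq_norm_graphL2, map_add]
  exact norm_add_le _ _

theorem graphNorm1_le_graphNorm1_add {a b : V} (h : ⟪(a : X), (b : X)⟫ + ⟪d a, d b⟫ = 0) :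
    graphNorm1 d a ≤ graphNorm1 d (a + b) := by
  rw [← inner_graphL2] at h
  simp only [graphNorm1_eq_norm_graphL2, map_add]
  rw [mul_self_le_mul_self_iff (norm_nonneg _) (norm_nonneg _),
    norm_add_sq_eq_norm_sq_add_norm_sq_real h]
  exact le_add_of_nonneg_right (mul_self_nonneg _)

variable {E : Type*} [AddCommGroup E] [Module ℝ E] (j : E →ₗ[ℝ] V) (P : V → E)

/-- `j ∘ P` is the orthogonal projection of `V` onto `j(E)` for the graph inner product. -/
def IsGraphProjection : Prop :=
  ∀ (v : V) (x : E), ⟪(v : X) - (j (P v) : X), (j x : X)⟫ + ⟪d v - d (j (P v)), d (j x)⟫ = 0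

theorem graphNorm1_sub_proj_le (hP : IsGraphProjection d j P) (v : V) (x : E) :
    graphNorm1 d (v - j (P v)) ≤ graphNorm1 d (v - j x) := by
  have hsplit : v - j x = (v - j (P v)) + j (P v - x) := by
    rw [map_sub]; abel
  rw [hsplit]
  apply graphNorm1_le_graphNorm1_add
  simpa only [Submodule.coe_sub, map_sub] using hP v (P v - x)

theorem graphNorm1_sub_proj_add_le (hP : IsGraphProjection d j P) (u p : V) :
    graphNorm1 d (u + p - j (P (u + p))) ≤
      (⨅ v : E, graphNorm1 d (u - j v)) + ⨅ q : E, graphNorm1 d (p - j q) := by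
  refine le_ciInf_add_ciInf fun v q => ?_
  calc graphNorm1 d (u + p - j (P (u + p)))
      ≤ graphNorm1 d (u + p - j (v + q)) := graphNorm1_sub_proj_le d j P hP _ _
    _ = graphNorm1 d ((u - j v) + (p - j q)) := by rw [map_add]; abel_nf
    _ ≤ graphNorm1 d (u - j v) + graphNorm1 d (p - j q) := graphNorm1_add_le d _ _

end GraphNorm

section AdjointConsistency

variable {E W : Type*}
  [NormedAddCommGroup E] [InnerProductSpace ℝ E] [FiniteDimensional ℝ E]
  [NormedAddCommGroup W] [InnerProductSpace ℝ W]
  {T : E →ₗ[ℝ] W} {S : W →ₗ[ℝ] E}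

theorem norm_apply_le_of_inner_adjoint (hS : ∀ (w : W) (x : E), ⟪S w, x⟫ = ⟪w, T x⟫) (w : W) :
    ‖S w‖ ≤ ‖LinearMap.toContinuousLinearMap T‖ * ‖w‖ := by
  rcases eq_or_ne (S w) 0 with h | h
  · rw [h, norm_zero]; positivity
  refine le_of_mul_le_mul_right ?_ (norm_pos_iff.mpr h)
  calc ‖S w‖ * ‖S w‖ = ⟪w, T (S w)⟫ := by rw [← hS, real_inner_self_eq_norm_mul_norm]
    _ ≤ ‖w‖ * ‖T (S w)‖ := real_inner_le_norm _ _
    _ ≤ ‖w‖ * (‖LinearMap.toContinuousLinearMap T‖ * ‖S w‖) :=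
      mul_le_mul_of_nonneg_left ((LinearMap.toContinuousLinearMap T).le_opNorm _) (norm_nonneg _)
    _ = ‖LinearMap.toContinuousLinearMap T‖ * ‖w‖ * ‖S w‖ := by ring

theorem opNorm_id_sub_comp_le (hS : ∀ (w : W) (x : E), ⟪S w, x⟫ = ⟪w, T x⟫) :
    ‖LinearMap.toContinuousLinearMap (LinearMap.id - S ∘ₗ T)‖ ≤
      1 + ‖LinearMap.toContinuousLinearMap T‖ ^ 2 := by
  refine ContinuousLinearMap.opNorm_le_bound _ (by positivity) fun x => ?_
  have hT := (LinearMap.toContinuousLinearMap T).le_opNorm x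
  calc ‖x - S (T x)‖ ≤ ‖x‖ + ‖S (T x)‖ := norm_sub_le _ _
    _ ≤ ‖x‖ + ‖LinearMap.toContinuousLinearMap T‖ * (‖LinearMap.toContinuousLinearMap T‖ * ‖x‖) :=
      add_le_add le_rfl ((norm_apply_le_of_inner_adjoint hS _).trans
        (mul_le_mul_of_nonneg_left hT (norm_nonneg _)))
    _ = (1 + ‖LinearMap.toContinuousLinearMap T‖ ^ 2) * ‖x‖ := by ring

variable (Q : W →L[ℝ] E)

theorem norm_adjoint_sub_leftInverse_le (hS : ∀ (w : W) (x : E), ⟪S w, x⟫ = ⟪w, T x⟫)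
    (hQ : ∀ x : E, Q (T x) = x) (g : W) (φ : E) :
    ‖S g - Q g‖ ≤
      ‖Q‖ * (‖LinearMap.toContinuousLinearMap (LinearMap.id - S ∘ₗ T)‖ * ‖g‖) +
        (‖LinearMap.toContinuousLinearMap T‖ + (2 + ‖LinearMap.toContinuousLinearMap T‖ ^ 2) * ‖Q‖)
          * ‖g - T φ‖ := by
  set J := LinearMap.toContinuousLinearMap (LinearMap.id - S ∘ₗ T)
  set t := ‖LinearMap.toContinuousLinearMap T‖
  set e := ‖g - T φ‖
  have hsplit : S g - Q g = S (g - T φ) - Q (g - T φ) - J φ := by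
    have hJ_apply : J φ = φ - S (T φ) := rfl
    rw [hJ_apply, map_sub, map_sub, hQ]
    abel
  have hφ : ‖φ‖ ≤ ‖Q‖ * (‖g‖ + e) := by
    calc ‖φ‖ = ‖Q (T φ)‖ := by rw [hQ]
      _ ≤ ‖Q‖ * ‖T φ‖ := Q.le_opNorm _
      _ ≤ ‖Q‖ * (‖g‖ + e) := by gcongr; exact norm_le_norm_add_norm_sub _ _
  have hJφ : ‖J φ‖ ≤ ‖J‖ * (‖Q‖ * (‖g‖ + e)) :=
    (J.le_opNorm φ).trans (by gcongr)
  have hJ : ‖J‖ * ‖Q‖ * e ≤ (1 + t ^ 2) * ‖Q‖ * e := by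
    gcongr; exact opNorm_id_sub_comp_le hS
  have hSe : ‖S (g - T φ)‖ ≤ t * e := norm_apply_le_of_inner_adjoint hS _
  have hQe : ‖Q (g - T φ)‖ ≤ ‖Q‖ * e := Q.le_opNorm _
  calc ‖S g - Q g‖ = ‖S (g - T φ) - Q (g - T φ) - J φ‖ := by rw [hsplit]
    _ ≤ ‖S (g - T φ)‖ + ‖Q (g - T φ)‖ + ‖J φ‖ := norm_sub_le_of_le (norm_sub_le _ _) le_rfl
    _ ≤ ‖Q‖ * (‖J‖ * ‖g‖) + (t + (2 + t ^ 2) * ‖Q‖) * e := by nlinarith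

theorem norm_adjoint_sub_leftInverse_le_iInf (hS : ∀ (w : W) (x : E), ⟪S w, x⟫ = ⟪w, T x⟫)
    (hQ : ∀ x : E, Q (T x) = x) (g : W) :
    ‖S g - Q g‖ ≤
      (‖LinearMap.toContinuousLinearMap T‖ + (2 + ‖LinearMap.toContinuousLinearMap T‖ ^ 2) * ‖Q‖)
        * (‖LinearMap.toContinuousLinearMap (LinearMap.id - S ∘ₗ T)‖ * ‖g‖ +
          ⨅ φ : E, ‖g - T φ‖) := by
  set K := ‖LinearMap.toContinuousLinearMap T‖ + (2 + ‖LinearMap.toContinuousLinearMap T‖ ^ 2) * ‖Q‖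
  set a := ‖LinearMap.toContinuousLinearMap (LinearMap.id - S ∘ₗ T)‖ * ‖g‖
  have hQK : ‖Q‖ ≤ K := by
    have ht : 0 ≤ ‖LinearMap.toContinuousLinearMap T‖ := norm_nonneg _
    simp only [K]
    nlinarith [norm_nonneg Q]
  have hK : 0 ≤ K := (norm_nonneg Q).trans hQK
  rw [mul_add, Real.mul_iInf_of_nonneg hK, add_comm]
  refine le_ciInf_add fun φ => ?_
  calc ‖S g - Q g‖ ≤ ‖Q‖ * a + K * ‖g - T φ‖ := norm_adjoint_sub_leftInverse_le Q hS hQ g φ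
    _ ≤ K * ‖g - T φ‖ + K * a := by
      have : ‖Q‖ * a ≤ K * a := by gcongr
      linarith

end AdjointConsistency

theorem semilinear_crimes_data_estimate_general
    (V0 : Submodule ℝ W0) (V1 : Submodule ℝ W1)
    (d0 : V0 →ₗ[ℝ] W1) (d1 : V1 →ₗ[ℝ] W2)
    -- the nonlinearity: monotone and `V`-Lipschitz
    (F : V1 → W1) (CF : ℝ)
    (hFlip : ∀ v v' : V1, ‖F v - F v'‖ ≤ CF * graphNorm1 d1 (v - v'))
    -- the discrete space and the injective bounded inclusion `i1`
    {W1h : Type*} [NormedAddCommGroup W1h] [InnerProductSpace ℝ W1h]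
    [FiniteDimensional ℝ W1h]
    (i1 : W1h →ₗ[ℝ] W1)
    (hi1V : ∀ x : W1h, i1 x ∈ V1)
    -- the adjoint `i1*` of `i1`
    (i1s : W1 →ₗ[ℝ] W1h)
    (hi1s : ∀ (w : W1) (x : W1h), ⟪i1s w, x⟫ = ⟪w, i1 x⟫)
    -- `P_{V_h}`: the `V1`-graph-orthogonal projection through `i1`
    (PVh : V1 → W1h)
    (hPVh : ∀ (v : V1) (x : W1h),
      ⟪(v : W1) - i1 (PVh v), i1 x⟫ +
        ⟪d1 v - d1 ⟨i1 (PVh v), hi1V (PVh v)⟩, d1 ⟨i1 x, hi1V x⟩⟫ = 0)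
    -- the bounded linear projection `Pi1`
    (Pi1 : W1 →L[ℝ] W1h) (hPi1 : ∀ x : W1h, Pi1 (i1 x) = x) :
    ∃ C : ℝ, 0 < C ∧ ∀ (f : W1) (σ : V0) (u p : V1),
      IsMixedSemilinearSolution V0 d0 d1 F f σ u p →
      ‖i1s (f - F (u + p)) -
          (Pi1 f - Pi1 (F ⟨i1 (PVh (u + p)), hi1V (PVh (u + p))⟩))‖ ≤
        C * (‖LinearMap.toContinuousLinearMap (LinearMap.id - i1s ∘ₗ i1)‖ *
               ‖f - F (u + p)‖ +
             (⨅ φ : W1h, ‖(f - F (u + p)) - i1 φ‖) +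
             (⨅ v : W1h, graphNorm1 d1 (u - ⟨i1 v, hi1V v⟩)) +
             (⨅ q : W1h, graphNorm1 d1 (p - ⟨i1 q, hi1V q⟩))) := by
  set K := ‖LinearMap.toContinuousLinearMap i1‖ +
    (2 + ‖LinearMap.toContinuousLinearMap i1‖ ^ 2) * ‖Pi1‖
  set M := ‖Pi1‖ * |CF|
  refine ⟨1 + K + M, by positivity, fun f σ u p _ => ?_⟩
  set g := f - F (u + p)
  set wh : V1 := ⟨i1 (PVh (u + p)), hi1V (PVh (u + p))⟩
  set best := (⨅ v : W1h, graphNorm1 d1 (u - ⟨i1 v, hi1V v⟩)) +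
    ⨅ q : W1h, graphNorm1 d1 (p - ⟨i1 q, hi1V q⟩)
  set a := ‖LinearMap.toContinuousLinearMap (LinearMap.id - i1s ∘ₗ i1)‖ * ‖g‖ +
    ⨅ φ : W1h, ‖g - i1 φ‖
  have hdata : ‖i1s g - Pi1 g‖ ≤ K * a := norm_adjoint_sub_leftInverse_le_iInf Pi1 hi1s hPi1 g
  have hbest : graphNorm1 d1 (u + p - wh) ≤ best :=
    graphNorm1_sub_proj_add_le d1 (LinearMap.codRestrict V1 i1 hi1V) PVh hPVh u p
  have hnonlinear : ‖Pi1 (F (u + p) - F wh)‖ ≤ M * best :=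
    calc ‖Pi1 (F (u + p) - F wh)‖ ≤ ‖Pi1‖ * (|CF| * graphNorm1 d1 (u + p - wh)) := by
          refine Pi1.le_opNorm_of_le ((hFlip _ _).trans ?_)
          exact mul_le_mul_of_nonneg_right (le_abs_self CF) (graphNorm1_nonneg d1 _)
      _ ≤ M * best := by rw [← mul_assoc]; gcongr
  have hsplit : i1s g - (Pi1 f - Pi1 (F wh)) = (i1s g - Pi1 g) - Pi1 (F (u + p) - F wh) := by
    simp only [g, map_sub]; abel
  have ha0 : 0 ≤ a := add_nonneg (by positivity) (Real.iInf_nonneg fun _ => norm_nonneg _)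
  have hbest0 : 0 ≤ best := add_nonneg (Real.iInf_nonneg fun _ => graphNorm1_nonneg d1 _)
    (Real.iInf_nonneg fun _ => graphNorm1_nonneg d1 _)
  rw [hsplit, add_assoc a]
  calc _ ≤ K * a + M * best := norm_sub_le_of_le hdata hnonlinear
    _ ≤ (1 + K + M) * (a + best) := by
      nlinarith [show 0 ≤ K by positivity, show 0 ≤ M by positivity]

/-- **Estimate for the data-approximation term in the semilinear variational crimes
analysis** (Theorem 4.5 of the paper): choosing `f_h = Pi1 f` and
`F_h = Pi1 ∘ F ∘ i1` for any uniformly bounded linear projection `Pi1`, the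
consistency term `‖i1*(f − F(u+p)) − (f_h − F_h(P_{V_h}(u+p)))‖_h` is controlled by
the nonconformity `‖id − J1‖`, the best `W`-approximation of `f − F(u+p)`, and the
best `V`-approximations of `u` and `p`. -/
theorem semilinear_crimes_data_estimate
    (V0 : Submodule ℝ W0) (V1 : Submodule ℝ W1)
    (d0 : V0 →ₗ[ℝ] W1) (d1 : V1 →ₗ[ℝ] W2)
    (hV0dense : Dense (V0 : Set W0)) (hV1dense : Dense (V1 : Set W1))
    (hgraph0 : IsClosed {p : W0 × W1 | ∃ τ : V0, (τ : W0) = p.1 ∧ d0 τ = p.2})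
    (hgraph1 : IsClosed {p : W1 × W2 | ∃ v : V1, (v : W1) = p.1 ∧ d1 v = p.2})
    (hsub : ∀ τ : V0, d0 τ ∈ V1)
    (hdd : ∀ τ : V0, d1 ⟨d0 τ, hsub τ⟩ = 0)
    (hBclosed : IsClosed (Set.range (⇑d0)))
    (hd1closed : IsClosed (Set.range (⇑d1)))
    -- the nonlinearity: monotone and `V`-Lipschitz
    (F : V1 → W1) (CF : ℝ)
    (hFmono : ∀ v v' : V1, 0 ≤ ⟪F v - F v', (v : W1) - (v' : W1)⟫)
    (hFlip : ∀ v v' : V1, ‖F v - F v'‖ ≤ CF * graphNorm1 d1 (v - v'))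
    -- the discrete space and the injective bounded inclusion `i1`
    {W1h : Type*} [NormedAddCommGroup W1h] [InnerProductSpace ℝ W1h]
    [FiniteDimensional ℝ W1h]
    (i1 : W1h →ₗ[ℝ] W1) (hi1inj : Function.Injective i1)
    (hi1V : ∀ x : W1h, i1 x ∈ V1)
    -- the adjoint `i1*` of `i1`
    (i1s : W1 →ₗ[ℝ] W1h)
    (hi1s : ∀ (w : W1) (x : W1h), ⟪i1s w, x⟫ = ⟪w, i1 x⟫)
    -- `P_{V_h}`: the `V1`-graph-orthogonal projection through `i1`
    (PVh : V1 → W1h)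
    (hPVh : ∀ (v : V1) (x : W1h),
      ⟪(v : W1) - i1 (PVh v), i1 x⟫ +
        ⟪d1 v - d1 ⟨i1 (PVh v), hi1V (PVh v)⟩, d1 ⟨i1 x, hi1V x⟩⟫ = 0)
    -- the bounded linear projection `Pi1`
    (Pi1 : W1 →L[ℝ] W1h) (hPi1 : ∀ x : W1h, Pi1 (i1 x) = x) :
    ∃ C : ℝ, 0 < C ∧ ∀ (f : W1) (σ : V0) (u p : V1),
      IsMixedSemilinearSolution V0 d0 d1 F f σ u p →
      ‖i1s (f - F (u + p)) -
          (Pi1 f - Pi1 (F ⟨i1 (PVh (u + p)), hi1V (PVh (u + p))⟩))‖ ≤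
        C * (‖LinearMap.toContinuousLinearMap (LinearMap.id - i1s ∘ₗ i1)‖ *
               ‖f - F (u + p)‖ +
             (⨅ φ : W1h, ‖(f - F (u + p)) - i1 φ‖) +
             (⨅ v : W1h, graphNorm1 d1 (u - ⟨i1 v, hi1V v⟩)) +
             (⨅ q : W1h, graphNorm1 d1 (p - ⟨i1 q, hi1V q⟩))) :=
  semilinear_crimes_data_estimate_general V0 V1 d0 d1 F CF hFlip i1 hi1V i1s hi1s PVh hPVh Pi1 hPi1

end
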